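/- Suppose h ∈ 𝓗. Then for every ϑ ∈ (ϑ₀, ϑ₀ + δ], the Kullback–Leibler divergence J is twice differentiable at ϑ with J″(ϑ) = (S·(S + h)·κ²/δ)·∫_{0}^{1 − (ϑ − ϑ₀)/δ} x^{κ−1}·(x + (ϑ − ϑ₀)/δ)^{κ−1}/(S·x^κ + λ₀) dx; moreover, for every ϑ ∈ Θ with ϑ < ϑ₀ − δ or ϑ > ϑ₀ + δ, J is twice differentiable at ϑ with J″(ϑ) = 0. -/

import Mathlib

open MeasureTheory Real Set Filter

/-- The cusp signal shape: `ψ(x) = (x/δ)^κ` for `0 < x < δ`, `1` for `x ≥ δ`, `0` for `x ≤ 0`. -/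
noncomputable def psi (δ κ : ℝ) (x : ℝ) : ℝ :=
  if δ ≤ x then 1 else if 0 < x then (x / δ) ^ κ else 0

/-- Theoretical intensity `λ(ϑ, t) = S ψ(t − ϑ) + λ₀`. -/
noncomputable def lamT (S lam0 δ κ : ℝ) (ϑ t : ℝ) : ℝ :=
  S * psi δ κ (t - ϑ) + lam0

/-- Real intensity `λ*(ϑ₀, t) = (S + h) ψ(t − ϑ₀) + λ₀`. -/
noncomputable def lamR (S h lam0 δ κ : ℝ) (ϑ₀ t : ℝ) : ℝ :=
  (S + h) * psi δ κ (t - ϑ₀) + lam0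

/-- The Kullback–Leibler divergence `J(ϑ)`. -/
noncomputable def JKL (S h lam0 δ κ τ ϑ₀ : ℝ) (ϑ : ℝ) : ℝ :=
  ∫ t in (min ϑ ϑ₀)..τ,
    (lamT S lam0 δ κ ϑ t / lamR S h lam0 δ κ ϑ₀ t - 1 -
      Real.log (lamT S lam0 δ κ ϑ t / lamR S h lam0 δ κ ϑ₀ t)) *
      lamR S h lam0 δ κ ϑ₀ t

/-!
Write `L u = log (S ψ u + λ₀)`, so that `L' = φ = S ψ' / (S ψ + λ₀)`. For `ϑ, ϑ₀ ≥ 0` the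
integrand of `J` vanishes below `min ϑ ϑ₀`, and expanding the logarithm gives, up to a constant,
`J ϑ = S ∫₀^τ ψ (t - ϑ) dt - ∫₀^τ λ* t · L (t - ϑ) dt`.
The functions `ψ`, `L` and `λ*` are primitives of the integrable functions `ψ'`, `φ` and
`(S + h) ψ' (· - ϑ₀)`, and for such a primitive `b`, Fubini and the fundamental theorem of calculus
give `d/dx ∫ a t · b (t + x) dt = ∫ a t · b' (t + x) dt` wherever the right side is continuous.
Hence `J' ϑ = ∫ φ u · λ* (u + ϑ) du - S` on `(0, τ - δ)`, and
`J'' ϑ = (S + h) ∫ φ u · ψ' (u + ϑ - ϑ₀) du`, the integral being continuous in `ϑ > ϑ₀` since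
`ψ'` is bounded on `[c, ∞)` for every `c > 0`. Both `φ` and `ψ'` vanish off `(0, δ]`, so the
integral is `0` for `|ϑ - ϑ₀| > δ`, and for `0 < ϑ - ϑ₀ ≤ δ` the substitution `u = δ x` gives the
stated formula.
-/

open Topology

lemma sub_eq_integral_of_hasDerivAt_off_countable {f f' : ℝ → ℝ} {s : Set ℝ} (hs : s.Countable)
    (hf : Continuous f) (hf' : Integrable f') (hd : ∀ x ∉ s, HasDerivAt f (f' x) x) (x y : ℝ) :
    f y - f x = ∫ z in x..y, f' z :=
  (integral_eq_of_hasDerivAt_off_countable f f' hs hf.continuousOn (fun z hz => hd z hz.2)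
    hf'.intervalIntegrable).symm

section ShiftedIntegral

variable {μ : Measure ℝ} {a b b' : ℝ → ℝ}

lemma continuous_of_sub_eq_integral (hb' : Integrable b')
    (hb : ∀ x y, b y - b x = ∫ z in x..y, b' z) : Continuous b := by
  have : b = fun y => b 0 + ∫ z in (0 : ℝ)..y, b' z := funext fun y => by linarith [hb 0 y]
  rw [this]
  exact continuous_const.add
    (intervalIntegral.continuous_primitive (fun _ _ => hb'.intervalIntegrable) 0)

lemma abs_sub_le_integral_norm (hb' : Integrable b')
    (hb : ∀ x y, b y - b x = ∫ z in x..y, b' z) (x y : ℝ) :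
    |b y - b x| ≤ ∫ z, ‖b' z‖ := by
  rw [hb]
  exact (intervalIntegral.norm_integral_le_integral_norm_uIoc).trans
    (setIntegral_le_integral hb'.norm (ae_of_all _ fun _ => norm_nonneg _))

lemma integrable_mul_comp_add (ha : Integrable a μ) (hb' : Integrable b')
    (hb : ∀ x y, b y - b x = ∫ z in x..y, b' z) (x : ℝ) :
    Integrable (fun t => a t * b (t + x)) μ := by
  refine ha.mul_bdd (c := |b 0| + ∫ z, ‖b' z‖)
    ((continuous_of_sub_eq_integral hb' hb).comp (continuous_add_const x)).aestronglyMeasurable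
    (ae_of_all _ fun t => ?_)
  rw [Real.norm_eq_abs]
  linarith [abs_sub_le_integral_norm hb' hb 0 (t + x), abs_sub_abs_le_abs_sub (b (t + x)) (b 0)]

variable [SFinite μ]

lemma integrable_mul_comp_add_prod (ha : Integrable a μ) (hb' : Integrable b') :
    Integrable (Function.uncurry fun x t => a t * b' (t + x)) (volume.prod μ) := by
  have hshear : AEStronglyMeasurable (fun p : ℝ × ℝ => b' (p.2 + p.1)) (volume.prod μ) :=
    (hb'.aestronglyMeasurable.comp_snd (μ := μ)).comp_measurePreserving
      (measurePreserving_prod_add_swap volume μ)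
  have hmeas : AEStronglyMeasurable (Function.uncurry fun x t => a t * b' (t + x))
      (volume.prod μ) :=
    ha.aestronglyMeasurable.comp_snd.mul hshear
  rw [integrable_prod_iff' hmeas]
  refine ⟨ae_of_all _ fun t => (hb'.comp_add_left t).const_mul (a t), ?_⟩
  simp_rw [Function.uncurry_apply_pair, norm_mul, integral_const_mul,
    integral_add_left_eq_self (fun x => ‖b' x‖)]
  exact ha.norm.mul_const _

lemma integral_mul_comp_add_sub (ha : Integrable a μ) (hb' : Integrable b')
    (hb : ∀ x y, b y - b x = ∫ z in x..y, b' z) (x₁ x₂ : ℝ) :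
    ∫ t, a t * b (t + x₂) ∂μ - ∫ t, a t * b (t + x₁) ∂μ =
      ∫ x in x₁..x₂, ∫ t, a t * b' (t + x) ∂μ := by
  have hprod := (integrable_mul_comp_add_prod ha hb').mono_measure
    (Measure.prod_mono (Measure.restrict_le_self (s := uIoc x₁ x₂)) le_rfl)
  rw [intervalIntegral_integral_swap hprod, ← integral_sub (integrable_mul_comp_add ha hb' hb x₂)
    (integrable_mul_comp_add ha hb' hb x₁)]
  congr 1 with t
  rw [intervalIntegral.integral_const_mul, ← mul_sub,
    intervalIntegral.integral_comp_add_left b' t, hb]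

lemma integral_mul_comp_add_eq_add_primitive (ha : Integrable a μ) (hb' : Integrable b')
    (hb : ∀ x y, b y - b x = ∫ z in x..y, b' z) (x₀ : ℝ) :
    (fun x => ∫ t, a t * b (t + x) ∂μ) =
      fun x => ∫ t, a t * b (t + x₀) ∂μ + ∫ y in x₀..x, ∫ t, a t * b' (t + y) ∂μ := by
  ext x
  rw [← integral_mul_comp_add_sub ha hb' hb]
  ring

lemma continuous_integral_mul_comp_add (ha : Integrable a μ) (hb' : Integrable b')
    (hb : ∀ x y, b y - b x = ∫ z in x..y, b' z) :
    Continuous fun x => ∫ t, a t * b (t + x) ∂μ := by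
  rw [integral_mul_comp_add_eq_add_primitive ha hb' hb 0]
  exact continuous_const.add (intervalIntegral.continuous_primitive
    (fun _ _ => (integrable_mul_comp_add_prod ha hb').integral_prod_left.intervalIntegrable) 0)

lemma hasDerivAt_integral_mul_comp_add (ha : Integrable a μ) (hb' : Integrable b')
    (hb : ∀ x y, b y - b x = ∫ z in x..y, b' z) {x₀ : ℝ}
    (hc : ContinuousAt (fun x => ∫ t, a t * b' (t + x) ∂μ) x₀) :
    HasDerivAt (fun x => ∫ t, a t * b (t + x) ∂μ) (∫ t, a t * b' (t + x₀) ∂μ) x₀ := by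
  have hQ := (integrable_mul_comp_add_prod ha hb').integral_prod_left
  rw [integral_mul_comp_add_eq_add_primitive ha hb' hb x₀]
  exact (intervalIntegral.integral_hasDerivAt_right hQ.intervalIntegrable
    hQ.aestronglyMeasurable.stronglyMeasurableAtFilter hc).const_add _

lemma hasDerivAt_integral_mul_comp_sub (ha : Integrable a μ) (hb' : Integrable b')
    (hb : ∀ x y, b y - b x = ∫ z in x..y, b' z) {x₀ : ℝ}
    (hc : ContinuousAt (fun x => ∫ t, a t * b' (t - x) ∂μ) x₀) :
    HasDerivAt (fun x => ∫ t, a t * b (t - x) ∂μ) (-∫ t, a t * b' (t - x₀) ∂μ) x₀ := by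
  have hc' : ContinuousAt (fun x => ∫ t, a t * b' (t + x) ∂μ) (-x₀) := by
    simpa [Function.comp_def, sub_eq_add_neg] using
      hc.comp_of_eq continuous_neg.continuousAt (neg_neg x₀)
  simpa [Function.comp_def, sub_eq_add_neg] using
    (hasDerivAt_integral_mul_comp_add ha hb' hb hc').comp x₀ (hasDerivAt_neg x₀)

end ShiftedIntegral

noncomputable def psiDeriv (δ κ : ℝ) (z : ℝ) : ℝ :=
  if 0 < z ∧ z ≤ δ then κ / δ * (z / δ) ^ (κ - 1) else 0

section Psi

variable {δ κ : ℝ}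

lemma psi_of_nonpos (hδ : 0 < δ) {x : ℝ} (hx : x ≤ 0) : psi δ κ x = 0 := by
  rw [psi, if_neg (by linarith), if_neg (by linarith)]

lemma psi_of_le {x : ℝ} (hx : δ ≤ x) : psi δ κ x = 1 := by
  rw [psi, if_pos hx]

lemma psi_eq_rpow (hδ : 0 < δ) (hκ : 0 < κ) {x : ℝ} (h0 : 0 ≤ x) (h1 : x ≤ δ) :
    psi δ κ x = (x / δ) ^ κ := by
  unfold psi
  split_ifs with hδx hx
  · rw [le_antisymm h1 hδx, div_self hδ.ne', one_rpow]
  · rfl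
  · rw [le_antisymm (not_lt.1 hx) h0, zero_div, zero_rpow hκ.ne']

lemma psi_nonneg (hδ : 0 < δ) (x : ℝ) : 0 ≤ psi δ κ x := by
  unfold psi
  split_ifs
  exacts [zero_le_one, by positivity, le_rfl]

lemma continuous_psi (hδ : 0 < δ) (hκ : 0 < κ) : Continuous (psi δ κ) := by
  have : psi δ κ = fun x => (min (max x 0) δ / δ) ^ κ := by
    ext x
    rcases le_total x 0 with hx | hx
    · rw [psi_of_nonpos hδ hx, max_eq_right hx, min_eq_left hδ.le, zero_div, zero_rpow hκ.ne']
    rcases le_total δ x with hδx | hδx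
    · rw [psi_of_le hδx, max_eq_left hx, min_eq_right hδx, div_self hδ.ne', one_rpow]
    · rw [psi_eq_rpow hδ hκ hx hδx, max_eq_left hx, min_eq_left hδx]
  rw [this]
  exact ((continuous_id.max continuous_const).min continuous_const).div_const δ
    |>.rpow_const fun _ => Or.inr hκ.le

lemma psiDeriv_eq_zero_of_notMem {z : ℝ} (hz : z ∉ Ioc 0 δ) : psiDeriv δ κ z = 0 :=
  if_neg hz

lemma psiDeriv_of_mem {z : ℝ} (hz : z ∈ Ioc 0 δ) : psiDeriv δ κ z = κ / δ * (z / δ) ^ (κ - 1) :=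
  if_pos hz

lemma psiDeriv_nonneg (hδ : 0 < δ) (hκ : 0 < κ) (z : ℝ) : 0 ≤ psiDeriv δ κ z := by
  unfold psiDeriv
  split_ifs with hz
  · have := hz.1
    positivity
  · exact le_rfl

lemma psiDeriv_le (hδ : 0 < δ) (hκ : 0 < κ) (hκ1 : κ ≤ 1) {c z : ℝ} (hc : 0 < c) (hz : c ≤ z) :
    psiDeriv δ κ z ≤ κ / δ * (c / δ) ^ (κ - 1) := by
  by_cases hzδ : z ∈ Ioc 0 δ
  · rw [psiDeriv_of_mem hzδ]
    exact mul_le_mul_of_nonneg_left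
      (rpow_le_rpow_of_nonpos (by positivity) (by gcongr) (by linarith)) (by positivity)
  · rw [psiDeriv_eq_zero_of_notMem hzδ]
    positivity

lemma measurable_psiDeriv : Measurable (psiDeriv δ κ) :=
  Measurable.ite measurableSet_Ioc ((measurable_id.div_const δ).pow_const _ |>.const_mul _)
    measurable_const

lemma integrable_psiDeriv (hδ : 0 < δ) (hκ : 0 < κ) : Integrable (psiDeriv δ κ) := by
  have h : IntegrableOn (fun z : ℝ => κ / δ * (δ ^ (κ - 1))⁻¹ * z ^ (κ - 1)) (Ioc 0 δ) :=
    ((intervalIntegrable_iff_integrableOn_Ioc_of_le hδ.le).1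
      (intervalIntegral.intervalIntegrable_rpow' (by linarith))).const_mul _
  refine (h.congr_fun (fun z hz => ?_) measurableSet_Ioc).integrable_of_forall_notMem_eq_zero
    fun z hz => psiDeriv_eq_zero_of_notMem hz
  rw [psiDeriv_of_mem hz, div_rpow hz.1.le hδ.le]
  ring

lemma continuousAt_psiDeriv (hδ : 0 < δ) {z : ℝ} (h0 : z ≠ 0) (hδz : z ≠ δ) :
    ContinuousAt (psiDeriv δ κ) z := by
  rcases lt_or_gt_of_ne h0 with hz | hz
  · exact continuousAt_const.congr <| eventually_of_mem (Iio_mem_nhds hz) fun y hy =>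
      (psiDeriv_eq_zero_of_notMem fun h => (h.1.trans hy).false).symm
  rcases lt_or_gt_of_ne hδz with hzδ | hzδ
  · refine ContinuousAt.congr ?_ <| eventually_of_mem (Ioo_mem_nhds hz hzδ) fun y hy =>
      (psiDeriv_of_mem (Ioo_subset_Ioc_self hy)).symm
    exact continuousAt_const.mul
      ((continuousAt_id.div_const δ).rpow_const (Or.inl (by positivity)))
  · exact continuousAt_const.congr <| eventually_of_mem (Ioi_mem_nhds hzδ) fun y hy =>
      (psiDeriv_eq_zero_of_notMem fun h => (h.2.trans_lt hy).false).symm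

lemma hasDerivAt_psi (hδ : 0 < δ) (hκ : 0 < κ) {x : ℝ} (hx : x ∉ ({0, δ} : Set ℝ)) :
    HasDerivAt (psi δ κ) (psiDeriv δ κ x) x := by
  simp only [mem_insert_iff, mem_singleton_iff, not_or] at hx
  obtain ⟨h0, hδx⟩ := hx
  rcases lt_or_gt_of_ne h0 with hx | hx
  · rw [psiDeriv_eq_zero_of_notMem fun h => (h.1.trans hx).false]
    exact (hasDerivAt_const x (0 : ℝ)).congr_of_eventuallyEq <|
      eventually_of_mem (Iic_mem_nhds hx) fun y hy => psi_of_nonpos hδ hy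
  rcases lt_or_gt_of_ne hδx with hxδ | hxδ
  · have h := ((hasDerivAt_id x).div_const δ).rpow_const (p := κ) (Or.inl (by positivity))
    rw [psiDeriv_of_mem ⟨hx, hxδ.le⟩]
    refine (h.congr_of_eventuallyEq <| eventually_of_mem (Ioo_mem_nhds hx hxδ) fun y hy =>
      psi_eq_rpow hδ hκ hy.1.le hy.2.le).congr_deriv ?_
    simp only [id]
    ring
  · rw [psiDeriv_eq_zero_of_notMem fun h => (h.2.trans_lt hxδ).false]
    exact (hasDerivAt_const x (1 : ℝ)).congr_of_eventuallyEq <|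
      eventually_of_mem (Ici_mem_nhds hxδ) fun y hy => psi_of_le hy

lemma psi_sub_eq_integral (hδ : 0 < δ) (hκ : 0 < κ) (x y : ℝ) :
    psi δ κ y - psi δ κ x = ∫ z in x..y, psiDeriv δ κ z :=
  sub_eq_integral_of_hasDerivAt_off_countable ((countable_singleton δ).insert 0)
    (continuous_psi hδ hκ) (integrable_psiDeriv hδ hκ)
    (fun _ => hasDerivAt_psi hδ hκ) x y

end Psi

noncomputable def logIntensityDeriv (S lam0 δ κ : ℝ) (u : ℝ) : ℝ :=
  S * psiDeriv δ κ u / (S * psi δ κ u + lam0)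

section LogIntensity

variable {S lam0 δ κ : ℝ}

lemma intensity_pos (hS : 0 < S) (hlam0 : 0 < lam0) (hδ : 0 < δ) (u : ℝ) :
    0 < S * psi δ κ u + lam0 := by
  have := psi_nonneg (κ := κ) hδ u
  positivity

lemma logIntensityDeriv_eq_zero_of_notMem {u : ℝ} (hu : u ∉ Ioc 0 δ) :
    logIntensityDeriv S lam0 δ κ u = 0 := by
  rw [logIntensityDeriv, psiDeriv_eq_zero_of_notMem hu, mul_zero, zero_div]

lemma logIntensityDeriv_nonneg (hS : 0 < S) (hlam0 : 0 < lam0) (hδ : 0 < δ) (hκ : 0 < κ)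
    (u : ℝ) : 0 ≤ logIntensityDeriv S lam0 δ κ u :=
  div_nonneg (mul_nonneg hS.le (psiDeriv_nonneg hδ hκ u)) (intensity_pos hS hlam0 hδ u).le

lemma integrable_logIntensityDeriv (hS : 0 < S) (hlam0 : 0 < lam0) (hδ : 0 < δ) (hκ : 0 < κ) :
    Integrable (logIntensityDeriv S lam0 δ κ) := by
  refine ((integrable_psiDeriv hδ hκ).const_mul (S / lam0)).mono'
    ((measurable_psiDeriv.const_mul S).div
      (((continuous_psi hδ hκ).measurable.const_mul S).add_const lam0)).aestronglyMeasurable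
    (ae_of_all _ fun u => ?_)
  rw [Real.norm_of_nonneg (logIntensityDeriv_nonneg hS hlam0 hδ hκ u)]
  calc logIntensityDeriv S lam0 δ κ u ≤ S * psiDeriv δ κ u / lam0 :=
        div_le_div_of_nonneg_left (mul_nonneg hS.le (psiDeriv_nonneg hδ hκ u)) hlam0
          (le_add_of_nonneg_left (mul_nonneg hS.le (psi_nonneg hδ u)))
    _ = S / lam0 * psiDeriv δ κ u := by ring

lemma log_intensity_sub_eq_integral (hS : 0 < S) (hlam0 : 0 < lam0) (hδ : 0 < δ) (hκ : 0 < κ)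
    (x y : ℝ) :
    log (S * psi δ κ y + lam0) - log (S * psi δ κ x + lam0) =
      ∫ u in x..y, logIntensityDeriv S lam0 δ κ u :=
  sub_eq_integral_of_hasDerivAt_off_countable ((countable_singleton δ).insert 0)
    (((continuous_psi hδ hκ).const_mul S).add_const lam0 |>.log
      fun u => (intensity_pos hS hlam0 hδ u).ne')
    (integrable_logIntensityDeriv hS hlam0 hδ hκ)
    (fun u hu => (((hasDerivAt_psi hδ hκ hu).const_mul S).add_const lam0).log
      (intensity_pos hS hlam0 hδ u).ne') x y

end LogIntensity

section Intensity

variable {S h lam0 δ κ ϑ₀ : ℝ}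

lemma continuous_lamR (hδ : 0 < δ) (hκ : 0 < κ) : Continuous (lamR S h lam0 δ κ ϑ₀) :=
  (((continuous_psi hδ hκ).comp (continuous_sub_right ϑ₀)).const_mul _).add_const _

lemma lamR_pos (hSh : 0 < S + h) (hlam0 : 0 < lam0) (hδ : 0 < δ) (t : ℝ) :
    0 < lamR S h lam0 δ κ ϑ₀ t := by
  have := psi_nonneg (κ := κ) hδ (t - ϑ₀)
  unfold lamR
  positivity

lemma lamR_sub_eq_integral (hδ : 0 < δ) (hκ : 0 < κ) (x y : ℝ) :
    lamR S h lam0 δ κ ϑ₀ y - lamR S h lam0 δ κ ϑ₀ x =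
      ∫ t in x..y, (S + h) * psiDeriv δ κ (t - ϑ₀) := by
  rw [intervalIntegral.integral_const_mul, intervalIntegral.integral_comp_sub_right (psiDeriv δ κ),
    ← psi_sub_eq_integral hδ hκ]
  unfold lamR
  ring

end Intensity

noncomputable def JKLDeriv (S h lam0 δ κ ϑ₀ : ℝ) (ϑ : ℝ) : ℝ :=
  (∫ u, logIntensityDeriv S lam0 δ κ u * lamR S h lam0 δ κ ϑ₀ (u + ϑ)) - S

section FirstDerivative

variable {S h lam0 δ κ τ ϑ₀ : ℝ}

lemma JKL_integrand_eq (hS : 0 < S) (hlam0 : 0 < lam0) (hδ : 0 < δ) (hSh : 0 < S + h)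
    (ϑ t : ℝ) :
    (lamT S lam0 δ κ ϑ t / lamR S h lam0 δ κ ϑ₀ t - 1 -
        log (lamT S lam0 δ κ ϑ t / lamR S h lam0 δ κ ϑ₀ t)) * lamR S h lam0 δ κ ϑ₀ t =
      S * psi δ κ (t - ϑ) - lamR S h lam0 δ κ ϑ₀ t * log (S * psi δ κ (t - ϑ) + lam0) +
        (lam0 - lamR S h lam0 δ κ ϑ₀ t +
          lamR S h lam0 δ κ ϑ₀ t * log (lamR S h lam0 δ κ ϑ₀ t)) := by
  have hR := (lamR_pos (κ := κ) (ϑ₀ := ϑ₀) hSh hlam0 hδ t).ne'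
  unfold lamT
  rw [log_div (intensity_pos hS hlam0 hδ (t - ϑ)).ne' hR]
  field_simp
  ring

lemma JKL_eq (hS : 0 < S) (hlam0 : 0 < lam0) (hδ : 0 < δ) (hκ : 0 < κ) (hSh : 0 < S + h)
    (hτ : 0 ≤ τ) (hϑ₀ : 0 ≤ ϑ₀) {ϑ : ℝ} (hϑ : 0 ≤ ϑ) :
    JKL S h lam0 δ κ τ ϑ₀ ϑ =
      S * (∫ t in Ioc 0 τ, psi δ κ (t - ϑ)) -
        (∫ t in Ioc 0 τ, lamR S h lam0 δ κ ϑ₀ t * log (S * psi δ κ (t - ϑ) + lam0)) +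
        ∫ t in Ioc 0 τ, (lam0 - lamR S h lam0 δ κ ϑ₀ t +
          lamR S h lam0 δ κ ϑ₀ t * log (lamR S h lam0 δ κ ϑ₀ t)) := by
  have hψ : Continuous fun t => psi δ κ (t - ϑ) :=
    (continuous_psi hδ hκ).comp (continuous_sub_right ϑ)
  have hR := continuous_lamR (S := S) (h := h) (lam0 := lam0) (ϑ₀ := ϑ₀) hδ hκ
  have hlog : Continuous fun t => lamR S h lam0 δ κ ϑ₀ t * log (S * psi δ κ (t - ϑ) + lam0) :=
    hR.mul ((hψ.const_mul S).add_const lam0 |>.log fun t => (intensity_pos hS hlam0 hδ _).ne')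
  have hconst : Continuous fun t => lam0 - lamR S h lam0 δ κ ϑ₀ t +
      lamR S h lam0 δ κ ϑ₀ t * log (lamR S h lam0 δ κ ϑ₀ t) :=
    (continuous_const.sub hR).add (hR.mul (hR.log fun t => (lamR_pos hSh hlam0 hδ t).ne'))
  have hF : Continuous fun t => (lamT S lam0 δ κ ϑ t / lamR S h lam0 δ κ ϑ₀ t - 1 -
      log (lamT S lam0 δ κ ϑ t / lamR S h lam0 δ κ ϑ₀ t)) * lamR S h lam0 δ κ ϑ₀ t := by
    simp only [JKL_integrand_eq hS hlam0 hδ hSh ϑ]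
    exact ((hψ.const_mul S).sub hlog).add hconst
  rw [JKL, ← intervalIntegral.integral_interval_sub_left (hF.intervalIntegrable 0 τ)
    (hF.intervalIntegrable 0 _), intervalIntegral.integral_of_le hτ,
    intervalIntegral.integral_congr (g := fun _ => 0) fun t ht => ?_]
  · simp only [JKL_integrand_eq (ϑ₀ := ϑ₀) hS hlam0 hδ hSh ϑ, intervalIntegral.integral_zero,
      sub_zero]
    rw [integral_add, integral_sub, integral_const_mul]
    exacts [(hψ.const_mul S).integrableOn_Ioc, hlog.integrableOn_Ioc,
      ((hψ.const_mul S).sub hlog).integrableOn_Ioc, hconst.integrableOn_Ioc]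
  · rw [uIcc_of_le (le_min hϑ hϑ₀)] at ht
    have h1 : t - ϑ ≤ 0 := by linarith [ht.2, min_le_left ϑ ϑ₀]
    have h2 : t - ϑ₀ ≤ 0 := by linarith [ht.2, min_le_right ϑ ϑ₀]
    simp [lamT, lamR, psi_of_nonpos hδ h1, psi_of_nonpos hδ h2, hlam0.ne']

lemma hasDerivAt_setIntegral_psi_sub (hδ : 0 < δ) (hκ : 0 < κ) (hτ : 0 ≤ τ) (ϑ : ℝ) :
    HasDerivAt (fun ϑ => ∫ t in Ioc 0 τ, psi δ κ (t - ϑ))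
      (psi δ κ (-ϑ) - psi δ κ (τ - ϑ)) ϑ := by
  have hQ : ∀ x, ∫ t in Ioc 0 τ, psiDeriv δ κ (t - x) = psi δ κ (τ - x) - psi δ κ (-x) :=
    fun x => by
      rw [← intervalIntegral.integral_of_le hτ, intervalIntegral.integral_comp_sub_right,
        ← psi_sub_eq_integral hδ hκ, zero_sub]
  have hP := hasDerivAt_integral_mul_comp_sub (μ := volume.restrict (Ioc 0 τ))
    (integrable_const (1 : ℝ)) (integrable_psiDeriv hδ hκ) (psi_sub_eq_integral hδ hκ) (x₀ := ϑ)
    (by simp only [one_mul, hQ]; exact (((continuous_psi hδ hκ).comp (continuous_sub_left τ)).sub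
      ((continuous_psi hδ hκ).comp continuous_neg)).continuousAt)
  simpa only [one_mul, hQ, neg_sub] using hP

lemma continuous_JKLDeriv (hS : 0 < S) (hlam0 : 0 < lam0) (hδ : 0 < δ) (hκ : 0 < κ) :
    Continuous (JKLDeriv S h lam0 δ κ ϑ₀) :=
  (continuous_integral_mul_comp_add (integrable_logIntensityDeriv hS hlam0 hδ hκ)
    (((integrable_psiDeriv hδ hκ).comp_sub_right ϑ₀).const_mul (S + h))
    (lamR_sub_eq_integral (lam0 := lam0) hδ hκ)).sub continuous_const

lemma setIntegral_lamR_mul_logIntensityDeriv (hϑ : ϑ ∈ Icc 0 (τ - δ)) :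
    ∫ t in Ioc 0 τ, lamR S h lam0 δ κ ϑ₀ t * logIntensityDeriv S lam0 δ κ (t - ϑ) =
      JKLDeriv S h lam0 δ κ ϑ₀ ϑ + S := by
  rw [JKLDeriv, sub_add_cancel, setIntegral_eq_integral_of_forall_compl_eq_zero fun t ht => ?_]
  · rw [eq_comm, ← integral_sub_right_eq_self _ ϑ]
    simp only [sub_add_cancel, mul_comm]
  · refine mul_eq_zero_of_right _ (logIntensityDeriv_eq_zero_of_notMem fun hmem => ht ⟨?_, ?_⟩)
    · linarith [hmem.1, hϑ.1]
    · linarith [hmem.2, hϑ.2]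

lemma hasDerivAt_setIntegral_lamR_mul_log (hS : 0 < S) (hlam0 : 0 < lam0) (hδ : 0 < δ)
    (hκ : 0 < κ) (hϑ : ϑ ∈ Ioo 0 (τ - δ)) :
    HasDerivAt
      (fun ϑ => ∫ t in Ioc 0 τ, lamR S h lam0 δ κ ϑ₀ t * log (S * psi δ κ (t - ϑ) + lam0))
      (-(JKLDeriv S h lam0 δ κ ϑ₀ ϑ + S)) ϑ := by
  have hQ : ContinuousAt (fun x => ∫ t in Ioc 0 τ,
      lamR S h lam0 δ κ ϑ₀ t * logIntensityDeriv S lam0 δ κ (t - x)) ϑ :=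
    ((continuous_JKLDeriv hS hlam0 hδ hκ).add_const S).continuousAt.congr <|
      eventually_of_mem (Ioo_mem_nhds hϑ.1 hϑ.2) fun x hx =>
        (setIntegral_lamR_mul_logIntensityDeriv (Ioo_subset_Icc_self hx)).symm
  rw [← setIntegral_lamR_mul_logIntensityDeriv (Ioo_subset_Icc_self hϑ)]
  exact hasDerivAt_integral_mul_comp_sub
    (continuous_lamR hδ hκ).integrableOn_Ioc (integrable_logIntensityDeriv hS hlam0 hδ hκ)
    (log_intensity_sub_eq_integral hS hlam0 hδ hκ) hQ

lemma hasDerivAt_JKL (hS : 0 < S) (hlam0 : 0 < lam0) (hδ : 0 < δ) (hκ : 0 < κ)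
    (hSh : 0 < S + h) (hϑ₀ : 0 ≤ ϑ₀) (hϑ : ϑ ∈ Ioo 0 (τ - δ)) :
    HasDerivAt (JKL S h lam0 δ κ τ ϑ₀) (JKLDeriv S h lam0 δ κ ϑ₀ ϑ) ϑ := by
  have hτ : 0 ≤ τ := by linarith [hϑ.1, hϑ.2]
  have hψ : psi δ κ (-ϑ) - psi δ κ (τ - ϑ) = -1 := by
    rw [psi_of_nonpos hδ (by linarith [hϑ.1]), psi_of_le (by linarith [hϑ.2])]
    ring
  have hderiv := (((hasDerivAt_setIntegral_psi_sub hδ hκ hτ ϑ).const_mul S).sub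
    (hasDerivAt_setIntegral_lamR_mul_log (h := h) (ϑ₀ := ϑ₀) hS hlam0 hδ hκ hϑ)).add_const
    (∫ t in Ioc 0 τ, (lam0 - lamR S h lam0 δ κ ϑ₀ t +
      lamR S h lam0 δ κ ϑ₀ t * log (lamR S h lam0 δ κ ϑ₀ t)))
  rw [hψ] at hderiv
  refine (hderiv.congr_deriv (by ring)).congr_of_eventuallyEq <|
    eventually_of_mem (Ioi_mem_nhds hϑ.1) fun x hx => JKL_eq hS hlam0 hδ hκ hSh hτ hϑ₀ (le_of_lt hx)

end FirstDerivative

noncomputable def derivCorrelation (S lam0 δ κ : ℝ) (s : ℝ) : ℝ :=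
  ∫ u, logIntensityDeriv S lam0 δ κ u * psiDeriv δ κ (u + s)

section SecondDerivative

variable {S h lam0 δ κ ϑ₀ : ℝ}

lemma hasDerivAt_JKLDeriv (hS : 0 < S) (hlam0 : 0 < lam0) (hδ : 0 < δ) (hκ : 0 < κ) {ϑ : ℝ}
    (hc : ContinuousAt (derivCorrelation S lam0 δ κ) (ϑ - ϑ₀)) :
    HasDerivAt (JKLDeriv S h lam0 δ κ ϑ₀)
      ((S + h) * derivCorrelation S lam0 δ κ (ϑ - ϑ₀)) ϑ := by
  have hcorr : (fun x => ∫ u, logIntensityDeriv S lam0 δ κ u *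
      ((S + h) * psiDeriv δ κ (u + x - ϑ₀))) =
      fun x => (S + h) * derivCorrelation S lam0 δ κ (x - ϑ₀) := by
    ext x
    simp only [derivCorrelation, ← integral_const_mul, mul_left_comm, add_sub_assoc]
  have hderiv := hasDerivAt_integral_mul_comp_add (integrable_logIntensityDeriv hS hlam0 hδ hκ)
    (((integrable_psiDeriv hδ hκ).comp_sub_right ϑ₀).const_mul (S + h))
    (lamR_sub_eq_integral (lam0 := lam0) hδ hκ) (x₀ := ϑ)
    (by rw [hcorr]; exact (hc.comp_of_eq (continuous_sub_right ϑ₀).continuousAt rfl).const_mul _)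
  rw [congrFun hcorr ϑ] at hderiv
  exact hderiv.sub_const S

lemma continuousAt_derivCorrelation (hS : 0 < S) (hlam0 : 0 < lam0) (hδ : 0 < δ) (hκ : 0 < κ)
    (hκ1 : κ ≤ 1) {s₀ : ℝ} (hs₀ : 0 < s₀) :
    ContinuousAt (derivCorrelation S lam0 δ κ) s₀ := by
  have hφ := integrable_logIntensityDeriv hS hlam0 hδ hκ
  refine continuousAt_of_dominated
    (bound := fun u => κ / δ * (s₀ / 2 / δ) ^ (κ - 1) * logIntensityDeriv S lam0 δ κ u)
    (Eventually.of_forall fun s => hφ.aestronglyMeasurable.mul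
      (measurable_psiDeriv.comp (measurable_add_const s)).aestronglyMeasurable)
    (eventually_of_mem (Ioi_mem_nhds (half_lt_self hs₀)) fun s hs => ae_of_all _ fun u => ?_)
    (hφ.const_mul _) ?_
  · rw [norm_of_nonneg (mul_nonneg (logIntensityDeriv_nonneg hS hlam0 hδ hκ u)
      (psiDeriv_nonneg hδ hκ _)), mul_comm]
    by_cases hu : u ∈ Ioc 0 δ
    · exact mul_le_mul_of_nonneg_right
        (psiDeriv_le hδ hκ hκ1 (half_pos hs₀) (by linarith [hu.1, mem_Ioi.1 hs]))
        (logIntensityDeriv_nonneg hS hlam0 hδ hκ u)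
    · simp [logIntensityDeriv_eq_zero_of_notMem hu]
  · have hfin : volume ({-s₀, δ - s₀} : Set ℝ) = 0 := (toFinite _).measure_zero _
    filter_upwards [measure_eq_zero_iff_ae_notMem.1 hfin] with u hu
    simp only [mem_insert_iff, mem_singleton_iff, not_or] at hu
    refine continuousAt_const.mul ((continuousAt_psiDeriv hδ ?_ ?_).comp
      (continuous_const_add u).continuousAt)
    · exact fun h => hu.1 (by linarith)
    · exact fun h => hu.2 (by linarith)

lemma derivCorrelation_eventuallyEq_zero {s₀ : ℝ} (hs₀ : δ < |s₀|) :
    derivCorrelation S lam0 δ κ =ᶠ[𝓝 s₀] 0 := by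
  refine eventually_of_mem ((isOpen_lt continuous_const continuous_abs).mem_nhds hs₀)
    fun s (hs : δ < |s|) => integral_eq_zero_of_ae (ae_of_all _ fun u => ?_)
  by_cases hu : u ∈ Ioc 0 δ
  · refine (mul_eq_zero_of_right _ (psiDeriv_eq_zero_of_notMem fun h => hs.not_gt ?_))
    exact abs_lt.2 ⟨by linarith [h.1, hu.2], by linarith [h.2, hu.1]⟩
  · exact mul_eq_zero_of_left (logIntensityDeriv_eq_zero_of_notMem hu) _

lemma derivCorrelation_eq (hS : 0 < S) (hlam0 : 0 < lam0) (hδ : 0 < δ) (hκ : 0 < κ) {s : ℝ}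
    (hs : 0 < s) (hsδ : s ≤ δ) :
    derivCorrelation S lam0 δ κ s = S * κ ^ 2 / δ *
      ∫ x in (0 : ℝ)..(1 - s / δ), x ^ (κ - 1) * (x + s / δ) ^ (κ - 1) / (S * x ^ κ + lam0) := by
  have hsupp : derivCorrelation S lam0 δ κ s =
      ∫ u in (0 : ℝ)..(δ - s), logIntensityDeriv S lam0 δ κ u * psiDeriv δ κ (u + s) := by
    rw [intervalIntegral.integral_of_le (by linarith), derivCorrelation,
      setIntegral_eq_integral_of_forall_compl_eq_zero fun u hu => ?_]
    by_cases hu' : u ∈ Ioc 0 δ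
    · refine mul_eq_zero_of_right _ (psiDeriv_eq_zero_of_notMem fun h => hu ⟨hu'.1, ?_⟩)
      linarith [h.2]
    · exact mul_eq_zero_of_left (logIntensityDeriv_eq_zero_of_notMem hu') _
  have hsubst := intervalIntegral.smul_integral_comp_mul_left
    (fun u => logIntensityDeriv S lam0 δ κ u * psiDeriv δ κ (u + s)) δ (a := 0) (b := 1 - s / δ)
  rw [mul_zero, show δ * (1 - s / δ) = δ - s by field_simp] at hsubst
  rw [hsupp, ← hsubst, smul_eq_mul, ← intervalIntegral.integral_const_mul,
    ← intervalIntegral.integral_const_mul]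
  refine intervalIntegral.integral_congr_ae (ae_of_all _ fun x hx => ?_)
  rw [uIoc_of_le (sub_nonneg.2 ((div_le_one hδ).2 hsδ))] at hx
  have hx1 : δ * x ≤ δ - s :=
    (mul_le_mul_of_nonneg_left hx.2 hδ.le).trans_eq (by field_simp)
  have hδx : δ * x / δ = x := by field_simp
  have hδxs : (δ * x + s) / δ = x + s / δ := by field_simp
  have hpos : 0 < S * x ^ κ + lam0 := by
    have := rpow_nonneg hx.1.le κ
    positivity
  rw [logIntensityDeriv, psiDeriv_of_mem ⟨by have := hx.1; positivity, by linarith⟩,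
    psiDeriv_of_mem ⟨by have := hx.1; positivity, by linarith⟩,
    psi_eq_rpow hδ hκ (by have := hx.1; positivity) (by linarith), hδx, hδxs]
  field_simp

lemma lam0_lt_div_log_one_add {S lam0 : ℝ} (hS : 0 < S) (hlam0 : 0 < lam0) :
    lam0 < S / log (1 + S / lam0) := by
  have hx : 0 < S / lam0 := div_pos hS hlam0
  have hlog : log (1 + S / lam0) < S / lam0 := by
    linarith [log_lt_sub_one_of_pos (by linarith : 0 < 1 + S / lam0)
      (by linarith : 1 + S / lam0 ≠ 1)]
  rw [lt_div_iff₀ (log_pos (by linarith))]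
  calc lam0 * log (1 + S / lam0) < lam0 * (S / lam0) := mul_lt_mul_of_pos_left hlog hlam0
    _ = S := by field_simp

theorem stmt_7_general (S lam0 δ τ κ α β ϑ₀ h : ℝ)
    (hS : 0 < S) (hlam0 : 0 < lam0) (hδ : 0 < δ)
    (hκ : κ ∈ Set.Ioo (0 : ℝ) (1 / 2))
    (hΘ : Set.Ioo (α - δ) (β + δ) ⊆ Set.Ioo 0 (τ - δ))
    (hϑ₀ : ϑ₀ ∈ Set.Ioo α β)
    (hH : S / Real.log (1 + S / lam0) - S - lam0 < h) :
    (∀ ϑ ∈ Set.Ioc ϑ₀ (ϑ₀ + δ),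
      ∃ J' : ℝ → ℝ,
        (∀ x ∈ Set.Ioo (α - δ) (β + δ), HasDerivAt (JKL S h lam0 δ κ τ ϑ₀) (J' x) x) ∧
        HasDerivAt J'
          ((S * (S + h) * κ ^ 2 / δ) *
            ∫ x in (0 : ℝ)..(1 - (ϑ - ϑ₀) / δ),
              x ^ (κ - 1) * (x + (ϑ - ϑ₀) / δ) ^ (κ - 1) / (S * x ^ κ + lam0)) ϑ) ∧
    (∀ ϑ ∈ Set.Ioo (α - δ) (β + δ), (ϑ < ϑ₀ - δ ∨ ϑ₀ + δ < ϑ) →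
      ∃ J' : ℝ → ℝ,
        (∀ x ∈ Set.Ioo (α - δ) (β + δ), HasDerivAt (JKL S h lam0 δ κ τ ϑ₀) (J' x) x) ∧
        HasDerivAt J' 0 ϑ) := by
  obtain ⟨hκ0, hκ1⟩ := hκ
  have hSh : 0 < S + h := by linarith [lam0_lt_div_log_one_add hS hlam0]
  have hϑ₀0 : 0 ≤ ϑ₀ := (hΘ ⟨by linarith [hϑ₀.1], by linarith [hϑ₀.2]⟩).1.le
  have hJ : ∀ x ∈ Ioo (α - δ) (β + δ),
      HasDerivAt (JKL S h lam0 δ κ τ ϑ₀) (JKLDeriv S h lam0 δ κ ϑ₀ x) x :=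
    fun x hx => hasDerivAt_JKL hS hlam0 hδ hκ0 hSh hϑ₀0 (hΘ hx)
  refine ⟨fun ϑ hϑ => ⟨_, hJ, ?_⟩, fun ϑ _ hϑ => ⟨_, hJ, ?_⟩⟩
  · have hs : 0 < ϑ - ϑ₀ := sub_pos.2 hϑ.1
    convert hasDerivAt_JKLDeriv (h := h) hS hlam0 hδ hκ0
      (continuousAt_derivCorrelation hS hlam0 hδ hκ0 (by linarith) hs) using 1
    rw [derivCorrelation_eq hS hlam0 hδ hκ0 hs (by linarith [hϑ.2])]
    ring
  · have hs : δ < |ϑ - ϑ₀| := lt_abs.2 (hϑ.symm.imp (fun _ => by linarith) (fun _ => by linarith))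
    have hzero := derivCorrelation_eventuallyEq_zero (S := S) (lam0 := lam0) (κ := κ) hs
    simpa [hzero.eq_of_nhds] using
      hasDerivAt_JKLDeriv (h := h) hS hlam0 hδ hκ0 (continuousAt_const.congr hzero.symm)

theorem stmt_7 (S lam0 δ τ κ α β ϑ₀ h : ℝ)
    (hS : 0 < S) (hlam0 : 0 < lam0) (hδ : 0 < δ) (hτ : 0 < τ)
    (hκ : κ ∈ Set.Ioo (0 : ℝ) (1 / 2)) (hαβ : α < β)
    (hΘ : Set.Ioo (α - δ) (β + δ) ⊆ Set.Ioo 0 (τ - δ))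
    (hϑ₀ : ϑ₀ ∈ Set.Ioo α β)
    (hH : S / Real.log (1 + S / lam0) - S - lam0 < h) :
    (∀ ϑ ∈ Set.Ioc ϑ₀ (ϑ₀ + δ),
      ∃ J' : ℝ → ℝ,
        (∀ x ∈ Set.Ioo (α - δ) (β + δ), HasDerivAt (JKL S h lam0 δ κ τ ϑ₀) (J' x) x) ∧
        HasDerivAt J'
          ((S * (S + h) * κ ^ 2 / δ) *
            ∫ x in (0 : ℝ)..(1 - (ϑ - ϑ₀) / δ),
              x ^ (κ - 1) * (x + (ϑ - ϑ₀) / δ) ^ (κ - 1) / (S * x ^ κ + lam0)) ϑ) ∧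
    (∀ ϑ ∈ Set.Ioo (α - δ) (β + δ), (ϑ < ϑ₀ - δ ∨ ϑ₀ + δ < ϑ) →
      ∃ J' : ℝ → ℝ,
        (∀ x ∈ Set.Ioo (α - δ) (β + δ), HasDerivAt (JKL S h lam0 δ κ τ ϑ₀) (J' x) x) ∧
        HasDerivAt J' 0 ϑ) :=
  stmt_7_general S lam0 δ τ κ α β ϑ₀ h hS hlam0 hδ hκ hΘ hϑ₀ hH
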